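/- Monotonicity of max- and min-QFI under a-majorization: if p and q are supported-below probability distributions on ℤ with p ≻_a q, then F_max(p) ≥ F_max(q) and F_min(p) ≥ F_min(q) (as values in [0,∞]). -/

import Mathlib

/-- Convolution of two sequences on `ℤ`: `(a*b)(n) = ∑_{k∈ℤ} a(k)·b(n−k)`.
For supported-below sequences this `tsum` has finitely many nonzero terms. -/
noncomputable def conv (a b : ℤ → ℝ) : ℤ → ℝ := fun n => ∑' k : ℤ, a k * b (n - k)

/-- A sequence is supported below if it vanishes for all sufficiently negative indices. -/
def SuppBelow (a : ℤ → ℝ) : Prop := ∃ N : ℤ, ∀ n : ℤ, n < N → a n = 0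

/-- A probability distribution on `ℤ`: nonnegative with total sum 1. -/
def IsProbDist (p : ℤ → ℝ) : Prop := (∀ n : ℤ, 0 ≤ p n) ∧ HasSum p 1

/-- `qt` is the reciprocal sequence `q̃` of `q`, relative to `nstar = n_*(q)`,
the least index where `q` is positive: `q̃` vanishes below `−n_*(q)` and
`(q̃*q)(n) = δ_{n,0}` for all `n`. -/
def IsRecip (q qt : ℤ → ℝ) (nstar : ℤ) : Prop :=
  IsLeast {n : ℤ | 0 < q n} nstar ∧ (∀ n : ℤ, n < -nstar → qt n = 0) ∧
  (∀ n : ℤ, conv qt q n = if n = 0 then (1 : ℝ) else 0)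

/-- The generalized Poisson sequence `P_λ : ℤ → ℝ`,
`P_λ(n) = e^{−λ}·λ^n/n!` for `n ≥ 0` and `P_λ(n) = 0` for `n < 0`. -/
noncomputable def poisson (lam : ℝ) : ℤ → ℝ :=
  fun n => if 0 ≤ n then Real.exp (-lam) * lam ^ n.toNat / (Nat.factorial n.toNat : ℝ) else 0

/-- The max-QFI `F_max(p) = inf{4λ | λ ≥ 0, P_λ ≻_a p} ∈ [0,∞]` (with
`inf ∅ = ∞`).  Since `P_λ ≻_a p` means `(P_λ * p̃)(n) ≥ 0` for all `n`, it is
expressed through the reciprocal sequence `pt = p̃` of `p`. -/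
noncomputable def Fmax (pt : ℤ → ℝ) : ENNReal :=
  sInf {x : ENNReal | ∃ lam : ℝ, 0 ≤ lam ∧
    (∀ n : ℤ, 0 ≤ conv (poisson lam) pt n) ∧ x = ENNReal.ofReal (4 * lam)}

/-- The min-QFI `F_min(p) = sup{4λ | λ ≥ 0, p ≻_a P_λ} ∈ [0,∞]`.  Since
`P̃_λ = P_{−λ}`, the condition `p ≻_a P_λ` reads `(p * P_{−λ})(n) ≥ 0`. -/
noncomputable def Fmin (p : ℤ → ℝ) : ENNReal :=
  sSup {x : ENNReal | ∃ lam : ℝ, 0 ≤ lam ∧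
    (∀ n : ℤ, 0 ≤ conv p (poisson (-lam)) n) ∧ x = ENNReal.ofReal (4 * lam)}

/-!
Supported-below sequences on `ℤ` are the coefficient functions of Hahn series over `ℤ`, and
convolution is their product, so it is associative. Hence if `b̃ * b = 1` then
`a * c = (a * b̃) * (b * c)`, a convolution of two nonnegative sequences: a-majorization is
transitive. Both inequalities follow: `P_λ ≻_a p ≻_a q` gives `P_λ ≻_a q`, so the set defining
`F_max(q)` contains that of `F_max(p)`, and `p ≻_a q ≻_a P_λ` gives `p ≻_a P_λ`, so the set
defining `F_min(p)` contains that of `F_min(q)`.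
-/

namespace SuppBelow

variable {a b : ℤ → ℝ}

noncomputable def toHahnSeries (ha : SuppBelow a) : HahnSeries ℤ ℝ :=
  ⟨a, by
    obtain ⟨N, hN⟩ := ha
    refine Set.IsWF.isPWO (BddBelow.wellFoundedOn_lt ⟨N, fun n hn => ?_⟩)
    by_contra hlt
    exact hn (hN n (lt_of_not_ge hlt))⟩

@[simp]
lemma coeff_toHahnSeries (ha : SuppBelow a) : ha.toHahnSeries.coeff = a := rfl

lemma conv_eq_coeff_mul (ha : SuppBelow a) (hb : SuppBelow b) (n : ℤ) :
    conv a b n = (ha.toHahnSeries * hb.toHahnSeries).coeff n := by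
  classical
  rw [HahnSeries.coeff_mul]
  set S := Finset.antidiagonal ha.toHahnSeries.isPWO_support hb.toHahnSeries.isPWO_support n
  have hmem : ∀ ij : ℤ × ℤ, ij ∈ S ↔ a ij.1 ≠ 0 ∧ b ij.2 ≠ 0 ∧ ij.1 + ij.2 = n := by
    intro ij
    simp [S, HahnSeries.support, Function.mem_support]
  have hsum : conv a b n = ∑ k ∈ S.image Prod.fst, a k * b (n - k) := by
    refine tsum_eq_sum fun k hk => ?_
    by_contra hne
    exact hk (Finset.mem_image.2 ⟨(k, n - k),
      (hmem _).2 ⟨left_ne_zero_of_mul hne, right_ne_zero_of_mul hne, by ring⟩, rfl⟩)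
  rw [hsum, Finset.sum_image]
  · refine Finset.sum_congr rfl fun ij hij => ?_
    have hij := ((hmem ij).1 hij).2.2
    rw [coeff_toHahnSeries, coeff_toHahnSeries, show n - ij.1 = ij.2 by omega]
  · intro x hx y hy hxy
    have hx := ((hmem x).1 hx).2.2
    have hy := ((hmem y).1 hy).2.2
    exact Prod.ext hxy (by omega)

end SuppBelow

lemma HahnSeries.coeff_mul_nonneg {x y : HahnSeries ℤ ℝ} (hx : ∀ n, 0 ≤ x.coeff n)
    (hy : ∀ n, 0 ≤ y.coeff n) (n : ℤ) : 0 ≤ (x * y).coeff n := by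
  rw [HahnSeries.coeff_mul]
  exact Finset.sum_nonneg fun ij _ => mul_nonneg (hx _) (hy _)

lemma suppBelow_poisson (lam : ℝ) : SuppBelow (poisson lam) :=
  ⟨0, fun n hn => by simp [poisson, not_le.2 hn]⟩

lemma IsRecip.suppBelow_recip {q qt : ℤ → ℝ} {nstar : ℤ} (h : IsRecip q qt nstar) :
    SuppBelow qt :=
  ⟨-nstar, h.2.1⟩

lemma conv_nonneg_trans {a b bt c : ℤ → ℝ} (ha : SuppBelow a) (hb : SuppBelow b)
    (hbt : SuppBelow bt) (hc : SuppBelow c)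
    (hrecip : ∀ n, conv bt b n = if n = 0 then 1 else 0)
    (hab : ∀ n, 0 ≤ conv a bt n) (hbc : ∀ n, 0 ≤ conv b c n) (n : ℤ) :
    0 ≤ conv a c n := by
  have hone : hbt.toHahnSeries * hb.toHahnSeries = 1 := by
    ext m
    rw [← SuppBelow.conv_eq_coeff_mul, hrecip m, HahnSeries.coeff_one]
    split_ifs <;> rfl
  have hfactor : ha.toHahnSeries * hc.toHahnSeries =
      (ha.toHahnSeries * hbt.toHahnSeries) * (hb.toHahnSeries * hc.toHahnSeries) := by
    rw [mul_assoc, ← mul_assoc hbt.toHahnSeries, hone, one_mul]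
  rw [SuppBelow.conv_eq_coeff_mul ha hc, hfactor]
  refine HahnSeries.coeff_mul_nonneg (fun m => ?_) (fun m => ?_) n
  · rw [← SuppBelow.conv_eq_coeff_mul]
    exact hab m
  · rw [← SuppBelow.conv_eq_coeff_mul]
    exact hbc m

theorem qfi_monotone_general (p q pt qt : ℤ → ℝ) (np nq : ℤ)
    (hpb : SuppBelow p) (hqb : SuppBelow q)
    (hpt : IsRecip p pt np) (hqt : IsRecip q qt nq)
    (hmaj : ∀ n : ℤ, 0 ≤ conv p qt n) :
    Fmax qt ≤ Fmax pt ∧ Fmin q ≤ Fmin p := by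
  constructor
  · refine sInf_le_sInf ?_
    rintro _ ⟨lam, hlam, hPp, rfl⟩
    exact ⟨lam, hlam, conv_nonneg_trans (suppBelow_poisson lam) hpb hpt.suppBelow_recip
      hqt.suppBelow_recip hpt.2.2 hPp hmaj, rfl⟩
  · refine sSup_le_sSup ?_
    rintro _ ⟨lam, hlam, hqP, rfl⟩
    exact ⟨lam, hlam, conv_nonneg_trans hpb hqb hqt.suppBelow_recip (suppBelow_poisson (-lam))
      hqt.2.2 hmaj hqP, rfl⟩

/-- monotonicity of max- and min-QFI under a-majorization:
if `p ≻_a q` for supported-below probability distributions `p, q`, then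
`F_max(p) ≥ F_max(q)` and `F_min(p) ≥ F_min(q)` in `[0,∞]`. -/
theorem qfi_monotone (p q pt qt : ℤ → ℝ) (np nq : ℤ)
    (hp : IsProbDist p) (hq : IsProbDist q)
    (hpb : SuppBelow p) (hqb : SuppBelow q)
    (hpt : IsRecip p pt np) (hqt : IsRecip q qt nq)
    (hmaj : ∀ n : ℤ, 0 ≤ conv p qt n) :
    Fmax qt ≤ Fmax pt ∧ Fmin q ≤ Fmin p :=
  qfi_monotone_general p q pt qt np nq hpb hqb hpt hqt hmaj
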